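/- arXiv:2102.13062 — 4 statements merged into one kernel-verified Lean document; each statement's English description precedes it below -/
import Mathlib

section
/- The bound 3/2 in the previous sufficiency result cannot be improved: for every e < 3/2, a single agent located at the point 1/2 with energy e cannot explore the segment [0,1]. Precisely, for every T ≥ 0 and every continuous function f : [0,T] → ℝ with f(0) = 1/2 whose total variation on [0,T] is less than 3/2, the image f([0,T]) does not contain [0,1]. -/
/-!
To cover `[0,1]` the agent must visit both endpoints. Whichever it reaches first lies at
distance `1/2` from the start, and from there it still has to reach the other endpoint, at
distance `1`; the total variation over these two legs is already `3/2`.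
-/

open Set

namespace eVariationOn

variable {α E : Type*} [LinearOrder α] [PseudoEMetricSpace E]

theorem edist_add_edist_le (f : α → E) {s : Set α} {x y z : α} (hx : x ∈ s) (hy : y ∈ s)
    (hz : z ∈ s) (hxy : x ≤ y) (hyz : y ≤ z) :
    edist (f x) (f y) + edist (f y) (f z) ≤ eVariationOn f s :=
  calc edist (f x) (f y) + edist (f y) (f z)
      ≤ eVariationOn f (s ∩ Icc x y) + eVariationOn f (s ∩ Icc y z) :=
        add_le_add (edist_le f ⟨hx, le_rfl, hxy⟩ ⟨hy, hxy, le_rfl⟩)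
          (edist_le f ⟨hy, le_rfl, hyz⟩ ⟨hz, hyz, le_rfl⟩)
    _ = eVariationOn f (s ∩ Icc x z) := Icc_add_Icc f hxy hyz hy
    _ ≤ eVariationOn f s := mono f inter_subset_left

theorem min_edist_add_edist_le (f : α → E) {s : Set α} {t₀ a b : α} (h₀ : t₀ ∈ s) (ha : a ∈ s)
    (hb : b ∈ s) (h₀a : t₀ ≤ a) (h₀b : t₀ ≤ b) :
    min (edist (f t₀) (f a)) (edist (f t₀) (f b)) + edist (f a) (f b) ≤ eVariationOn f s := by
  rcases le_total a b with hab | hba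
  · calc _ ≤ edist (f t₀) (f a) + edist (f a) (f b) := add_le_add (min_le_left _ _) le_rfl
      _ ≤ eVariationOn f s := edist_add_edist_le f h₀ ha hb h₀a hab
  · calc _ ≤ edist (f t₀) (f b) + edist (f b) (f a) := by
          rw [edist_comm (f a)]
          exact add_le_add (min_le_right _ _) le_rfl
      _ ≤ eVariationOn f s := edist_add_edist_le f h₀ hb ha h₀b hba

end eVariationOn

theorem single_agent_needs_three_halves_general
    (T : ℝ) (hT : 0 ≤ T) (f : ℝ → ℝ)
    (h0 : f 0 = 1 / 2)
    (hvar : eVariationOn f (Set.Icc 0 T) < ENNReal.ofReal (3 / 2)) :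
    ¬ Set.Icc (0 : ℝ) 1 ⊆ f '' Set.Icc 0 T := by
  intro hsub
  obtain ⟨a, ha, hfa⟩ := hsub ⟨le_rfl, zero_le_one⟩
  obtain ⟨b, hb, hfb⟩ := hsub ⟨zero_le_one, le_rfl⟩
  have hlength : min (edist (f 0) (f a)) (edist (f 0) (f b)) + edist (f a) (f b)
      = ENNReal.ofReal (3 / 2) := by
    rw [h0, hfa, hfb, edist_dist, edist_dist, edist_dist, ← ENNReal.ofReal_min,
      ← ENNReal.ofReal_add (by positivity) (by positivity)]
    norm_num [Real.dist_eq, abs_of_nonneg]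
  have hle := eVariationOn.min_edist_add_edist_le f (left_mem_Icc.2 hT) ha hb ha.1 hb.1
  exact (hlength ▸ hle).not_gt hvar

/-- A single agent starting at `1/2` whose trajectory has total variation
less than `3/2` cannot explore the segment `[0,1]`. -/
theorem single_agent_needs_three_halves
    (T : ℝ) (hT : 0 ≤ T) (f : ℝ → ℝ)
    (hcont : ContinuousOn f (Set.Icc 0 T)) (h0 : f 0 = 1 / 2)
    (hvar : eVariationOn f (Set.Icc 0 T) < ENNReal.ofReal (3 / 2)) :
    ¬ Set.Icc (0 : ℝ) 1 ⊆ f '' Set.Icc 0 T :=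
  single_agent_needs_three_halves_general T hT f h0 hvar
end

section
/- Consider two agents on the segment [0,3] (the 4-node path with three unit edges), agent 1 at position 1 and agent 2 at position 2, with energies e_1 = 3 + ε and e_2 = 1 − ε for some 0 < ε < 1. Then: (a) there is no exploration of [0,3] without energy sharing, i.e., for any continuous trajectories f_1, f_2 : [0,T] → ℝ with f_1(0)=1, f_2(0)=2, Var(f_1;[0,T]) ≤ 3+ε and Var(f_2;[0,T]) ≤ 1−ε, the union of their images does not contain [0,3]; but (b) there exists a valid energy-sharing strategy that explores [0,3]. -/
/-- Energy-sharing exploration strategy on the line for `k` agents with initial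
positions `s` and initial energies `e`. -/
structure LineStrategy (k : ℕ) (s e : Fin k → ℝ) where
  /-- time horizon -/
  T : ℝ
  hT : 0 ≤ T
  /-- trajectories of the agents -/
  f : Fin k → ℝ → ℝ
  cont : ∀ i, ContinuousOn (f i) (Set.Icc 0 T)
  start : ∀ i, f i 0 = s i
  /-- number of transfer events -/
  n : ℕ
  /-- times of the transfer events -/
  time : Fin n → ℝ
  time_mem : ∀ j, time j ∈ Set.Icc 0 T
  /-- giver of each transfer event -/
  giver : Fin n → Fin k
  /-- receiver of each transfer event -/
  receiver : Fin n → Fin k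
  giver_ne : ∀ j, giver j ≠ receiver j
  /-- amount of each transfer event -/
  amount : Fin n → ℝ
  amount_pos : ∀ j, 0 < amount j
  meet : ∀ j, f (giver j) (time j) = f (receiver j) (time j)

open Classical in
/-- Total amount of energy received by agent `i` in events occurring at time `≤ t`. -/
noncomputable def LineStrategy.received {k : ℕ} {s e : Fin k → ℝ}
    (S : LineStrategy k s e) (i : Fin k) (t : ℝ) : ℝ :=
  ∑ j ∈ Finset.univ.filter (fun j => S.time j ≤ t ∧ S.receiver j = i), S.amount j

open Classical in
/-- Total amount of energy given away by agent `i` in events occurring at time `≤ t`. -/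
noncomputable def LineStrategy.given {k : ℕ} {s e : Fin k → ℝ}
    (S : LineStrategy k s e) (i : Fin k) (t : ℝ) : ℝ :=
  ∑ j ∈ Finset.univ.filter (fun j => S.time j ≤ t ∧ S.giver j = i), S.amount j

/-- A strategy is valid if at every time every agent's energy balance dominates the
distance travelled so far (measured by the total variation of its trajectory). -/
def LineStrategy.Valid {k : ℕ} {s e : Fin k → ℝ} (S : LineStrategy k s e) : Prop :=
  ∀ i, ∀ t ∈ Set.Icc 0 S.T,
    eVariationOn (S.f i) (Set.Icc 0 t) ≤
      ENNReal.ofReal (e i + S.received i t - S.given i t)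

/-- A strategy explores a set `A` if the images of the trajectories cover `A`. -/
def LineStrategy.Explores {k : ℕ} {s e : Fin k → ℝ} (S : LineStrategy k s e)
    (A : Set ℝ) : Prop :=
  A ⊆ ⋃ i, S.f i '' Set.Icc 0 S.T

/-!
The agent starting at `2` has energy `1 - ε < 1`, so it stays in the open interval `(1, 3)` and
the agent starting at `1` must visit both `0` and `3`; whichever end it visits first, its walk has
length at least `min (1 + 3) (2 + 3) = 4 > 3 + ε`. With sharing, the agent starting at `1` walks
`1 → 0 → 2` (length `3`), hands its surplus `ε` over at `2`, and the other agent, now holding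
energy `1`, walks `2 → 3`.
-/

open Set

namespace eVariationOn

variable {α E : Type*} [LinearOrder α] [PseudoMetricSpace E]

theorem edist_add_edist_le_s4 (f : α → E) {s : Set α} {a b c : α} (ha : a ∈ s) (hb : b ∈ s)
    (hc : c ∈ s) (hab : a ≤ b) (hbc : b ≤ c) :
    edist (f a) (f b) + edist (f b) (f c) ≤ eVariationOn f s := by
  rw [← pair, ← pair]
  calc eVariationOn f {a, b} + eVariationOn f {b, c}
      ≤ eVariationOn f ({a, b} ∪ {b, c}) :=
        add_le_union f (by simp only [mem_insert_iff, mem_singleton_iff]; grind)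
    _ ≤ eVariationOn f s := mono f (by simp [insert_subset_iff, ha, hb, hc])

variable {f : α → E} {s : Set α} {C : ℝ}

theorem dist_le_of_le_ofReal (hC : 0 ≤ C) (h : eVariationOn f s ≤ ENNReal.ofReal C) {a b : α}
    (ha : a ∈ s) (hb : b ∈ s) : dist (f a) (f b) ≤ C := by
  rw [← ENNReal.ofReal_le_ofReal_iff hC, ← edist_dist]
  exact (edist_le f ha hb).trans h

theorem dist_add_dist_le_of_le_ofReal (hC : 0 ≤ C) (h : eVariationOn f s ≤ ENNReal.ofReal C)
    {a b c : α} (ha : a ∈ s) (hb : b ∈ s) (hc : c ∈ s) (hab : a ≤ b) (hbc : b ≤ c) :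
    dist (f a) (f b) + dist (f b) (f c) ≤ C := by
  rw [← ENNReal.ofReal_le_ofReal_iff hC, ENNReal.ofReal_add dist_nonneg dist_nonneg,
    ← edist_dist, ← edist_dist]
  exact (edist_add_edist_le_s4 f ha hb hc hab hbc).trans h

theorem min_dist_add_dist_le_of_le_ofReal (hC : 0 ≤ C) (h : eVariationOn f s ≤ ENNReal.ofReal C)
    {t₀ a b : α} (h₀ : t₀ ∈ s) (ha : a ∈ s) (hb : b ∈ s) (h₀a : t₀ ≤ a) (h₀b : t₀ ≤ b) :
    min (dist (f t₀) (f a) + dist (f a) (f b)) (dist (f t₀) (f b) + dist (f b) (f a)) ≤ C := by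
  rcases le_total a b with hab | hba
  · exact (min_le_left _ _).trans (dist_add_dist_le_of_le_ofReal hC h h₀ ha hb h₀a hab)
  · exact (min_le_right _ _).trans (dist_add_dist_le_of_le_ofReal hC h h₀ hb ha h₀b hba)

end eVariationOn

theorem Monotone.eVariationOn_Icc_eq {α : Type*} [LinearOrder α] {g : α → ℝ} (hg : Monotone g)
    (a b : α) : eVariationOn g (Icc a b) = ENNReal.ofReal (g b - g a) := by
  simpa using (hg.monotoneOn univ).eVariationOn_eq (mem_univ a) (mem_univ b)

theorem LipschitzWith.eVariationOn_comp_Icc_le {α E : Type*} [LinearOrder α]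
    [PseudoEMetricSpace E] {h : ℝ → E} {K : NNReal} (hh : LipschitzWith K h) {g : α → ℝ}
    (hg : Monotone g) (a b : α) :
    eVariationOn (h ∘ g) (Icc a b) ≤ K * ENNReal.ofReal (g b - g a) :=
  hg.eVariationOn_Icc_eq a b ▸ hh.lipschitzOnWith.comp_eVariationOn_le (mapsTo_univ _ _)

theorem not_subset_image_union_of_eVariationOn_le {ε : ℝ} (hε : 0 < ε) (hε1 : ε < 1) {T : ℝ}
    (hT : 0 ≤ T) {f₁ f₂ : ℝ → ℝ} (h₁ : f₁ 0 = 1) (h₂ : f₂ 0 = 2)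
    (hv₁ : eVariationOn f₁ (Icc 0 T) ≤ ENNReal.ofReal (3 + ε))
    (hv₂ : eVariationOn f₂ (Icc 0 T) ≤ ENNReal.ofReal (1 - ε)) :
    ¬ Icc (0 : ℝ) 3 ⊆ f₁ '' Icc 0 T ∪ f₂ '' Icc 0 T := by
  intro hcover
  have h0 : (0 : ℝ) ∈ Icc 0 T := left_mem_Icc.2 hT
  have hf₂ : ∀ t ∈ Icc 0 T, f₂ t ∈ Ioo 1 3 := fun t ht => by
    have hdist := eVariationOn.dist_le_of_le_ofReal (by linarith) hv₂ ht h0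
    rw [h₂, Real.dist_eq, abs_le] at hdist
    constructor <;> linarith
  obtain ⟨a, ha, hfa⟩ := (hcover ⟨le_rfl, by norm_num⟩).resolve_right
    fun ⟨t, ht, h⟩ => absurd (hf₂ t ht) (by norm_num [h])
  obtain ⟨b, hb, hfb⟩ := (hcover ⟨by norm_num, le_rfl⟩).resolve_right
    fun ⟨t, ht, h⟩ => absurd (hf₂ t ht) (by norm_num [h])
  have htour := eVariationOn.min_dist_add_dist_le_of_le_ofReal (by linarith) hv₁ h0 ha hb ha.1 hb.1
  rw [h₁, hfa, hfb] at htour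
  norm_num [Real.dist_eq] at htour
  linarith

noncomputable def sharingStrategy (ε : ℝ) (hε : 0 < ε) :
    LineStrategy 2 ![1, 2] ![3 + ε, 1 - ε] where
  T := 4
  hT := by norm_num
  f := ![fun t => |min t 3 - 1|, fun t => max (t - 1) 2]
  cont := Fin.forall_fin_two.2
    ⟨(by fun_prop : Continuous fun t : ℝ => |min t 3 - 1|).continuousOn,
      (by fun_prop : Continuous fun t : ℝ => max (t - 1) 2).continuousOn⟩
  start i := by fin_cases i <;> norm_num
  n := 1
  time _ := 3
  time_mem _ := by norm_num
  giver _ := 0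
  receiver _ := 1
  giver_ne _ := by decide
  amount _ := ε
  amount_pos _ := hε
  meet _ := by norm_num

section sharingStrategy

variable {ε : ℝ} {hε : 0 < ε}

theorem sharingStrategy_received (i : Fin 2) (t : ℝ) :
    (sharingStrategy ε hε).received i t = if 3 ≤ t ∧ i = 1 then ε else 0 := by
  rw [LineStrategy.received, Finset.sum_filter]
  exact (Fin.sum_univ_one _).trans (by simp [sharingStrategy, eq_comm])

theorem sharingStrategy_given (i : Fin 2) (t : ℝ) :
    (sharingStrategy ε hε).given i t = if 3 ≤ t ∧ i = 0 then ε else 0 := by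
  rw [LineStrategy.given, Finset.sum_filter]
  exact (Fin.sum_univ_one _).trans (by simp [sharingStrategy, eq_comm])

theorem sharingStrategy_valid : (sharingStrategy ε hε).Valid := by
  refine Fin.forall_fin_two.2 ⟨fun t _ => ?_, fun t ht => ?_⟩ <;>
    simp only [Fin.isValue, Matrix.cons_val_zero, Matrix.cons_val_one, Matrix.cons_val_fin_one,
      sharingStrategy_received, sharingStrategy_given, zero_ne_one, one_ne_zero, and_true,
      and_false, ↓reduceIte, add_zero, sub_zero]
  · have hlip : LipschitzWith 1 fun x : ℝ => |x - 1| := LipschitzWith.of_dist_le_mul fun x y => by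
      simpa [Real.dist_eq] using abs_abs_sub_abs_le_abs_sub (x - 1) (y - 1)
    have hmin : Monotone fun x : ℝ => min x 3 := fun _ _ h => min_le_min_right 3 h
    refine (hlip.eVariationOn_comp_Icc_le hmin 0 t).trans ?_
    rw [ENNReal.coe_one, one_mul, min_eq_left (by norm_num : (0 : ℝ) ≤ 3)]
    refine ENNReal.ofReal_le_ofReal ?_
    split_ifs <;> linarith [min_le_right t 3]
  · have ht4 : t ≤ 4 := ht.2
    have hmax : Monotone fun x : ℝ => max (x - 1) 2 := fun _ _ h => max_le_max_right 2 (by linarith)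
    refine (hmax.eVariationOn_Icc_eq 0 t).trans_le (ENNReal.ofReal_le_ofReal_iff'.2 ?_)
    rw [max_eq_right (by norm_num : (0 : ℝ) - 1 ≤ 2)]
    split_ifs with h3
    · exact Or.inl (by linarith [max_le (by linarith : t - 1 ≤ 3) (by norm_num : (2 : ℝ) ≤ 3)])
    · exact Or.inr (by rw [max_eq_right (by linarith)]; norm_num)

theorem sharingStrategy_explores : (sharingStrategy ε hε).Explores (Icc 0 3) := by
  intro x ⟨hx0, hx3⟩
  have hT : x + 1 ∈ Icc 0 (sharingStrategy ε hε).T := ⟨by linarith, show x + 1 ≤ 4 by linarith⟩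
  rw [mem_iUnion]
  rcases le_total x 2 with h2 | h2
  · refine ⟨0, x + 1, hT, show |min (x + 1) 3 - 1| = x from ?_⟩
    rw [min_eq_left (by linarith), add_sub_cancel_right, abs_of_nonneg hx0]
  · refine ⟨1, x + 1, hT, show max (x + 1 - 1) 2 = x from ?_⟩
    rw [add_sub_cancel_right, max_eq_left h2]

end sharingStrategy

/-- On the segment `[0,3]`, with agent 1 at position 1 holding energy `3 + ε`
and agent 2 at position 2 holding energy `1 - ε` (`0 < ε < 1`):
(a) exploration of `[0,3]` without energy sharing is impossible, but
(b) there is a valid energy-sharing strategy exploring `[0,3]`. -/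
theorem energy_sharing_helps_on_path (ε : ℝ) (hε : 0 < ε) (hε1 : ε < 1) :
    (∀ (T : ℝ), 0 ≤ T → ∀ f₁ f₂ : ℝ → ℝ,
      ContinuousOn f₁ (Set.Icc 0 T) → ContinuousOn f₂ (Set.Icc 0 T) →
      f₁ 0 = 1 → f₂ 0 = 2 →
      eVariationOn f₁ (Set.Icc 0 T) ≤ ENNReal.ofReal (3 + ε) →
      eVariationOn f₂ (Set.Icc 0 T) ≤ ENNReal.ofReal (1 - ε) →
      ¬ Set.Icc (0 : ℝ) 3 ⊆ f₁ '' Set.Icc 0 T ∪ f₂ '' Set.Icc 0 T) ∧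
    (∃ S : LineStrategy 2 ![1, 2] ![3 + ε, 1 - ε],
      S.Valid ∧ S.Explores (Set.Icc 0 3)) :=
  ⟨fun _ hT _ _ _ _ h₁ h₂ hv₁ hv₂ =>
    not_subset_image_union_of_eVariationOn_le hε hε1 hT h₁ h₂ hv₁ hv₂,
    sharingStrategy ε hε, sharingStrategy_valid, sharingStrategy_explores⟩
end

section
/- The factor 2 in the sufficiency bound for exploration by energy-sharing agents is asymptotically optimal even for trees: let k ≥ 1 and consider the star K_{1,2k} with center c, leaves l_1, …, l_{2k}, and all 2k edges of weight 1 (total weight 2k). Place one agent at the center c with energy e ≥ 0 and k agents with energy 0 at the leaves l_1, …, l_k. Then, in the discrete energy-sharing exploration model, a strategy exploring the star exists if and only if e ≥ 4k − 1. (Thus the total energy required is 4k − 1, which approaches twice the total edge weight 2k as k grows.) -/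
/-- One step of the discrete energy-sharing exploration model on an edge-weighted graph.
The state records the positions of the `k` agents, their current energies, and the set
of edges explored so far.  A step is either a move of one agent along an edge (which
costs the weight of the edge and marks it explored) or a transfer of a positive amount
of energy between two co-located agents. -/
inductive ExpStep {V : Type} (G : SimpleGraph V) (w : Sym2 V → ℝ) (k : ℕ) :
    ((Fin k → V) × (Fin k → ℝ) × Set (Sym2 V)) →
    ((Fin k → V) × (Fin k → ℝ) × Set (Sym2 V)) → Prop
  | move (pos : Fin k → V) (en : Fin k → ℝ) (X : Set (Sym2 V)) (i : Fin k) (v : V)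
      (hadj : G.Adj (pos i) v) (hen : w s(pos i, v) ≤ en i) :
      ExpStep G w k (pos, en, X)
        (Function.update pos i v,
         Function.update en i (en i - w s(pos i, v)),
         insert s(pos i, v) X)
  | transfer (pos : Fin k → V) (en : Fin k → ℝ) (X : Set (Sym2 V)) (i j : Fin k)
      (hij : i ≠ j) (hpos : pos i = pos j) (a : ℝ) (ha : 0 < a) (ha' : a ≤ en i) :
      ExpStep G w k (pos, en, X)
        (pos, Function.update (Function.update en i (en i - a)) j (en j + a), X)

/-- The agents, starting at positions `pos₀` with energies `en₀`, can explore `G`: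
some finite sequence of moves and transfers marks every edge of `G` explored. -/
def CanExplore {V : Type} (G : SimpleGraph V) (w : Sym2 V → ℝ) (k : ℕ)
    (pos₀ : Fin k → V) (en₀ : Fin k → ℝ) : Prop :=
  ∃ st : (Fin k → V) × (Fin k → ℝ) × Set (Sym2 V),
    Relation.ReflTransGen (ExpStep G w k) (pos₀, en₀, ∅) st ∧ G.edgeSet ⊆ st.2.2

/-- The star graph `K_{1,n}`: the center is `none`, the `n` leaves are `some j`. -/
def starGraph (n : ℕ) : SimpleGraph (Option (Fin n)) where
  Adj x y := (x = none ∧ y ≠ none) ∨ (y = none ∧ x ≠ none)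
  symm := by constructor; intro x y h; tauto
  loopless := by constructor; intro x h; tauto

/-!
Lower bound: along any strategy the potential
`2 · (explored edges) − (agents on leaves) + (total energy)` never increases. Entering a leaf
costs one unit of energy and puts one more agent on a leaf, which pays for the at most one edge
it explores; leaving a leaf costs one unit and takes one agent off the leaves. Agents on a leaf
whose edge is still unexplored keep energy `0` (nobody else can have reached them), so they
can neither move nor give energy. The potential starts at `e − k` and ends at least at
`2 · 2k − (k + 1)`, whence `e ≥ 4k − 1`.

Upper bound: the central agent alone visits the leaves one by one, returning to the center
after each leaf but the last, at cost `2 · (2k − 1) + 1`.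
-/

open Function

theorem Fintype.sum_update {ι M : Type*} [Fintype ι] [DecidableEq ι] [AddCommGroup M]
    (f : ι → M) (i : ι) (b : M) : ∑ x, update f i b x = ∑ x, f x + (b - f i) := by
  rw [Finset.sum_update_of_mem (Finset.mem_univ i), Fintype.sum_eq_sum_compl_add i f,
    Finset.compl_eq_univ_sdiff]
  abel

section General

variable {V : Type} {G : SimpleGraph V} {w : Sym2 V → ℝ} {m : ℕ}
  {st st' : (Fin m → V) × (Fin m → ℝ) × Set (Sym2 V)}

theorem ExpStep.explored_subset (h : ExpStep G w m st st') : st.2.2 ⊆ st'.2.2 := by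
  cases h with
  | move => exact Set.subset_insert _ _
  | transfer => exact subset_rfl

theorem explored_subset_of_reflTransGen (h : Relation.ReflTransGen (ExpStep G w m) st st') :
    st.2.2 ⊆ st'.2.2 := by
  induction h with
  | refl => exact subset_rfl
  | tail _ hstep ih => exact ih.trans hstep.explored_subset

end General

section Star

variable {n m : ℕ}

theorem mem_edgeSet_starGraph {x : Sym2 (Option (Fin n))} :
    x ∈ (starGraph n).edgeSet ↔ ∃ j : Fin n, s(none, some j) = x := by
  induction x using Sym2.ind with
  | _ a b =>
    rw [SimpleGraph.mem_edgeSet]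
    constructor
    · rintro (⟨rfl, hb⟩ | ⟨rfl, ha⟩)
      · obtain ⟨j, rfl⟩ := Option.ne_none_iff_exists'.mp hb
        exact ⟨j, rfl⟩
      · obtain ⟨j, rfl⟩ := Option.ne_none_iff_exists'.mp ha
        exact ⟨j, Sym2.eq_swap⟩
    · rintro ⟨j, hj⟩
      rcases Sym2.eq_iff.mp hj with ⟨rfl, rfl⟩ | ⟨rfl, rfl⟩ <;> simp [starGraph]

def exploredLeaves (X : Set (Sym2 (Option (Fin n)))) : Set (Fin n) :=
  {j | s(none, some j) ∈ X}

theorem exploredLeaves_empty : exploredLeaves (∅ : Set (Sym2 (Option (Fin n)))) = ∅ := rfl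

theorem exploredLeaves_insert (X : Set (Sym2 (Option (Fin n)))) (j : Fin n) :
    exploredLeaves (insert s(none, some j) X) = insert j (exploredLeaves X) := by
  ext j'
  simp [exploredLeaves]

theorem exploredLeaves_eq_univ {X : Set (Sym2 (Option (Fin n)))}
    (hX : (starGraph n).edgeSet ⊆ X) : exploredLeaves X = Set.univ :=
  Set.eq_univ_of_forall fun j => hX (mem_edgeSet_starGraph.mpr ⟨j, rfl⟩)

def leafCount (pos : Fin m → Option (Fin n)) : ℕ :=
  (Finset.univ.filter fun i => pos i ≠ none).card

theorem leafCount_update_some {pos : Fin m → Option (Fin n)} {i : Fin m} (hi : pos i = none)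
    (j : Fin n) : leafCount (update pos i (some j)) = leafCount pos + 1 := by
  rw [leafCount, leafCount, ← Finset.card_insert_of_notMem (a := i) (by simp [hi])]
  congr 1
  ext i'
  rcases eq_or_ne i' i with rfl | hi' <;> simp [*]

theorem leafCount_le (pos : Fin m → Option (Fin n)) : leafCount pos ≤ m :=
  (Finset.card_filter_le _ _).trans_eq (Finset.card_fin m)

end Star

section StarInvariant

variable {n m : ℕ}

abbrev StarState (n m : ℕ) : Type :=
  (Fin m → Option (Fin n)) × (Fin m → ℝ) × Set (Sym2 (Option (Fin n)))

noncomputable def starPotential (st : StarState n m) : ℝ :=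
  2 * (exploredLeaves st.2.2).ncard - leafCount st.1 + ∑ i, st.2.1 i

structure StarInv (c : ℝ) (st : StarState n m) : Prop where
  energy_nonneg : ∀ i, 0 ≤ st.2.1 i
  energy_eq_zero : ∀ i j, st.1 i = some j → j ∉ exploredLeaves st.2.2 → st.2.1 i = 0
  potential_le : starPotential st ≤ c

variable {c : ℝ} {pos : Fin m → Option (Fin n)} {en : Fin m → ℝ}
  {X : Set (Sym2 (Option (Fin n)))} {i : Fin m}

theorem StarInv.move_to_leaf (hinv : StarInv c (pos, en, X)) (hi : pos i = none) (j : Fin n)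
    (hen : 1 ≤ en i) :
    StarInv c (update pos i (some j), update en i (en i - 1), insert s(none, some j) X) := by
  refine ⟨?_, ?_, ?_⟩
  · exact (forall_update_iff en fun _ y => 0 ≤ y).2
      ⟨by linarith, fun i' _ => hinv.energy_nonneg i'⟩
  · intro i' j' hpos hj'
    rw [exploredLeaves_insert, Set.mem_insert_iff, not_or] at hj'
    rcases eq_or_ne i' i with rfl | hi'
    · simp only [update_self, Option.some_inj] at hpos
      exact (hj'.1 hpos.symm).elim
    · simp only [ne_eq, hi', not_false_eq_true, update_of_ne] at hpos ⊢
      exact hinv.energy_eq_zero i' j' hpos hj'.2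
  · have hcard : ((insert j (exploredLeaves X)).ncard : ℝ) ≤ (exploredLeaves X).ncard + 1 := by
      exact_mod_cast Set.ncard_insert_le j (exploredLeaves X)
    have hpot := hinv.potential_le
    simp only [starPotential, exploredLeaves_insert, leafCount_update_some hi,
      Fintype.sum_update] at hpot ⊢
    push_cast
    linarith

theorem StarInv.move_to_center (hinv : StarInv c (pos, en, X)) {j : Fin n}
    (hi : pos i = some j) (hen : 1 ≤ en i) :
    StarInv c (update pos i none, update en i (en i - 1), insert s(some j, none) X) := by
  have hj : j ∈ exploredLeaves X := by
    by_contra hj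
    linarith [hinv.energy_eq_zero i j hi hj]
  have hX : insert s(some j, none) X = X := Set.insert_eq_of_mem (Sym2.eq_swap ▸ hj)
  have hleaf : leafCount pos = leafCount (update pos i none) + 1 := by
    rw [← leafCount_update_some (update_self i none pos) j, update_idem, ← hi, update_eq_self]
  rw [hX]
  refine ⟨?_, ?_, ?_⟩
  · exact (forall_update_iff en fun _ y => 0 ≤ y).2
      ⟨by linarith, fun i' _ => hinv.energy_nonneg i'⟩
  · intro i' j' hpos hj'
    rcases eq_or_ne i' i with rfl | hi'
    · simp at hpos
    · simp only [ne_eq, hi', not_false_eq_true, update_of_ne] at hpos ⊢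
      exact hinv.energy_eq_zero i' j' hpos hj'
  · have hpot := hinv.potential_le
    simp only [starPotential, hleaf, Fintype.sum_update] at hpot ⊢
    push_cast at hpot
    linarith

theorem StarInv.transfer (hinv : StarInv c (pos, en, X)) {i j : Fin m} (hij : i ≠ j)
    (hpos : pos i = pos j) {a : ℝ} (ha : 0 < a) (ha' : a ≤ en i) :
    StarInv c (pos, update (update en i (en i - a)) j (en j + a), X) := by
  have hnn : ∀ i, 0 ≤ en i := hinv.energy_nonneg
  have hi_explored : ∀ j', pos i = some j' → j' ∈ exploredLeaves X := fun j' hj' =>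
    by_contra fun hj'' => by linarith [hinv.energy_eq_zero i j' hj' hj'']
  refine ⟨?_, ?_, ?_⟩
  · refine (forall_update_iff _ fun _ y => 0 ≤ y).2 ⟨by linarith [hnn j], fun i' _ => ?_⟩
    exact (forall_update_iff en fun _ y => 0 ≤ y).2 ⟨by linarith, fun i' _ => hnn i'⟩ i'
  · intro i' j' hpos' hj'
    have hi' : i' ≠ i := by rintro rfl; exact hj' (hi_explored j' hpos')
    have hj'' : i' ≠ j := by rintro rfl; exact hj' (hi_explored j' (hpos.trans hpos'))
    simp only [ne_eq, hi', hj'', not_false_eq_true, update_of_ne]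
    exact hinv.energy_eq_zero i' j' hpos' hj'
  · have hpot := hinv.potential_le
    simp only [starPotential, Fintype.sum_update, update_of_ne hij.symm] at hpot ⊢
    linarith

theorem StarInv.step {st st' : StarState n m} (hinv : StarInv c st)
    (h : ExpStep (starGraph n) (fun _ => 1) m st st') : StarInv c st' := by
  cases h with
  | move pos en X i v hadj hen =>
    rcases hadj with ⟨hi, hv⟩ | ⟨rfl, hi⟩
    · obtain ⟨j, rfl⟩ := Option.ne_none_iff_exists'.mp hv
      simp only [hi] at hen ⊢
      exact hinv.move_to_leaf hi j hen
    · obtain ⟨j, hj⟩ := Option.ne_none_iff_exists'.mp hi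
      simp only [hj] at hen ⊢
      exact hinv.move_to_center hj hen
  | transfer pos en X i j hij hpos a ha ha' => exact hinv.transfer hij hpos ha ha'

theorem StarInv.of_reflTransGen {st st' : StarState n m} (hinv : StarInv c st)
    (h : Relation.ReflTransGen (ExpStep (starGraph n) (fun _ => 1) m) st st') : StarInv c st' := by
  induction h with
  | refl => exact hinv
  | tail _ hstep ih => exact ih.step hstep

end StarInvariant

theorem le_of_canExplore_starGraph {n m : ℕ} {pos₀ : Fin m → Option (Fin n)}
    {en₀ : Fin m → ℝ}
    (hnn : ∀ i, 0 ≤ en₀ i) (hleaf : ∀ i, pos₀ i ≠ none → en₀ i = 0)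
    (h : CanExplore (starGraph n) (fun _ => 1) m pos₀ en₀) :
    2 * n + leafCount pos₀ ≤ m + ∑ i, en₀ i := by
  obtain ⟨st, hreach, hexplored⟩ := h
  have hinit : StarInv (starPotential (pos₀, en₀, ∅)) (pos₀, en₀, ∅) :=
    ⟨hnn, fun i j hi _ => hleaf i (Option.ne_none_iff_exists'.mpr ⟨j, hi⟩), le_rfl⟩
  have hfinal := hinit.of_reflTransGen hreach
  have hpot := hfinal.potential_le
  have hleaf_le : (leafCount st.1 : ℝ) ≤ m := by exact_mod_cast leafCount_le st.1
  have hsum := Finset.sum_nonneg fun i (_ : i ∈ Finset.univ) => hfinal.energy_nonneg i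
  simp only [starPotential, exploredLeaves_eq_univ hexplored, exploredLeaves_empty, Set.ncard_univ,
    Set.ncard_empty, Nat.card_fin, Nat.cast_zero] at hpot
  linarith

section Strategy

variable {n m : ℕ} {pos : Fin m → Option (Fin n)} {en : Fin m → ℝ}
  {X : Set (Sym2 (Option (Fin n)))} {i : Fin m}

theorem expStep_to_leaf (hi : pos i = none) (hen : 1 ≤ en i) (j : Fin n) :
    ExpStep (starGraph n) (fun _ => 1) m (pos, en, X)
      (update pos i (some j), update en i (en i - 1), insert s(none, some j) X) := by
  have h := ExpStep.move (G := starGraph n) (w := fun _ => 1) pos en X i (some j)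
    (by simp [hi, starGraph]) hen
  simpa only [hi] using h

theorem expStep_to_center {j : Fin n} (hi : pos i = some j) (hen : 1 ≤ en i) :
    ExpStep (starGraph n) (fun _ => 1) m (pos, en, X)
      (update pos i none, update en i (en i - 1), insert s(some j, none) X) := by
  have h := ExpStep.move (G := starGraph n) (w := fun _ => 1) pos en X i none
    (by simp [hi, starGraph]) hen
  simpa only [hi] using h

theorem reflTransGen_round_trip (hi : pos i = none) (hen : 2 ≤ en i) (j : Fin n) :
    Relation.ReflTransGen (ExpStep (starGraph n) (fun _ => 1) m) (pos, en, X)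
      (pos, update en i (en i - 2), insert s(none, some j) X) := by
  have h₁ := expStep_to_leaf (X := X) hi (by linarith) j
  have h₂ := expStep_to_center (en := update en i (en i - 1)) (X := insert s(none, some j) X)
    (update_self i (some j) pos) (by rw [update_self]; linarith)
  convert (Relation.ReflTransGen.single h₁).tail h₂ using 2
  · rw [update_idem, ← hi, update_eq_self]
  · rw [update_idem, update_self, sub_sub, one_add_one_eq_two, Sym2.eq_swap, Set.insert_idem]

theorem exists_reflTransGen_explored_of_center (S : Finset (Fin n)) (hi : pos i = none)
    (hen : 2 * S.card - 1 ≤ en i) :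
    ∃ st, Relation.ReflTransGen (ExpStep (starGraph n) (fun _ => 1) m) (pos, en, X) st ∧
      ∀ j ∈ S, s(none, some j) ∈ st.2.2 := by
  induction S using Finset.induction_on generalizing en X with
  | empty => exact ⟨_, .refl, by simp⟩
  | insert a S ha ih =>
    rw [Finset.card_insert_of_notMem ha] at hen
    push_cast at hen
    rcases S.eq_empty_or_nonempty with rfl | hS
    · exact ⟨_, .single (expStep_to_leaf hi (by linarith) a), by simp⟩
    · have hcard : (1 : ℝ) ≤ S.card := by exact_mod_cast hS.card_pos
      obtain ⟨st, hreach, hexplored⟩ := ih (en := update en i (en i - 2))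
        (X := insert s(none, some a) X) (by rw [update_self]; linarith)
      refine ⟨st, (reflTransGen_round_trip hi (by linarith) a).trans hreach, ?_⟩
      rintro j hj
      rcases Finset.mem_insert.mp hj with rfl | hj
      · exact explored_subset_of_reflTransGen hreach (Set.mem_insert _ _)
      · exact hexplored j hj

theorem canExplore_starGraph_of_center (hi : pos i = none) (hen : 2 * n - 1 ≤ en i) :
    CanExplore (starGraph n) (fun _ => 1) m pos en := by
  obtain ⟨st, hreach, hexplored⟩ :=
    exists_reflTransGen_explored_of_center (X := ∅) Finset.univ hi (by simpa using hen)
  refine ⟨st, hreach, fun x hx => ?_⟩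
  obtain ⟨j, rfl⟩ := mem_edgeSet_starGraph.mp hx
  exact hexplored j (Finset.mem_univ j)

end Strategy

/-- On the star `K_{1,2k}` with unit edge weights, with one agent of energy
`e` at the center and `k` agents of energy `0` at the leaves `l₁, …, l_k`, an
energy-sharing exploration strategy exists if and only if `e ≥ 4k - 1`. -/
theorem star_exploration_iff (k : ℕ) (e : ℝ) (he : 0 ≤ e) :
    CanExplore (starGraph (2 * k)) (fun _ => 1) (k + 1)
      (Fin.cases none (fun j : Fin k => some (Fin.castLE (by omega) j)))
      (Fin.cases e (fun _ => 0)) ↔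
    (4 * k - 1 : ℝ) ≤ e := by
  constructor
  · intro h
    have hleaf : leafCount (Fin.cases none (fun j : Fin k => some (Fin.castLE (by omega) j)) :
        Fin (k + 1) → Option (Fin (2 * k))) = k := by
      simp [leafCount, Finset.card_filter, Fin.sum_univ_succ]
    have hbound := le_of_canExplore_starGraph (Fin.forall_fin_succ.mpr ⟨he, fun _ => le_rfl⟩)
      (Fin.forall_fin_succ.mpr ⟨fun h => (h rfl).elim, fun _ _ => rfl⟩) h
    simp only [hleaf, Fin.sum_univ_succ, Fin.cases_zero, Fin.cases_succ, Finset.sum_const_zero]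
      at hbound
    push_cast at hbound
    linarith
  · intro he'
    exact canExplore_starGraph_of_center (i := 0) rfl (by rw [Fin.cases_zero]; push_cast; linarith)
end

section
/- Consider the meta-edge gadget: the simple graph on five vertices {u, w, v, x, y} with edges {u,w} and {w,v} of weight a > 0 and whisker edges {w,x} and {w,y} of weight b > 0. Every walk in this graph that starts at u, ends at v, traverses every edge at least once, and traverses each of the weight-a edges {u,w} and {w,v} exactly once, has total weighted length at least 2a + 4b (each whisker must be traversed at least twice). Moreover, there is such a walk of total weighted length exactly 2a + 4b. -/
/-!
A walk uses the edges at a vertex an even number of times in total unless the vertex is exactly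
one of its two distinct endpoints. The whisker ends `x`, `y` are not endpoints and carry a single
edge each, so a walk covering that edge uses it at least twice, which costs at least `4b`; the
walk `u w x w y w v` attains the bound.
-/

/-- The meta-edge gadget: vertices `0 = u`, `1 = w`, `2 = v`, `3 = x`, `4 = y`, with
edges `{u,w}`, `{w,v}` (the two weight-`a` edges) and whiskers `{w,x}`, `{w,y}`. -/
def gadget : SimpleGraph (Fin 5) :=
  SimpleGraph.fromEdgeSet {s(0, 1), s(1, 2), s(1, 3), s(1, 4)}

namespace SimpleGraph.Walk

variable {V : Type*} [DecidableEq V] {G : SimpleGraph V}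

theorem even_countP_edges_iff {u v : V} (p : G.Walk u v) (x : V) :
    Even (p.edges.countP (x ∈ ·)) ↔ (x = u ↔ x = v) := by
  induction p with
  | nil => simp
  | @cons u w v huw p ih =>
    have := huw.ne
    simp only [edges_cons, List.countP_cons, Sym2.mem_iff]
    grind

theorem two_le_count_edges_of_forall_mem_eq {u v x : V} (p : G.Walk u v) {f : Sym2 V}
    (hxu : x ≠ u) (hxv : x ≠ v) (hf : x ∈ f) (hx : ∀ e ∈ G.edgeSet, x ∈ e → e = f)
    (hfp : f ∈ p.edges) : 2 ≤ p.edges.count f := by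
  have hcount : p.edges.countP (x ∈ ·) = p.edges.count f := by
    rw [List.count_eq_countP]
    refine List.countP_congr fun e he => ?_
    have := hx e (p.edges_subset_edgeSet he)
    grind
  have heven : Even (p.edges.count f) := by
    rw [← hcount, even_countP_edges_iff]
    tauto
  have hpos : 0 < p.edges.count f := List.count_pos_iff.2 hfp
  obtain ⟨k, hk⟩ := heven
  omega

end SimpleGraph.Walk

theorem List.sum_map_eq_sum_count {α M : Type*} [DecidableEq α] [AddCommMonoid M]
    (l : List α) (s : Finset α) (hl : ∀ a ∈ l, a ∈ s) (f : α → M) :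
    (l.map f).sum = ∑ a ∈ s, l.count a • f a := by
  rw [Finset.sum_list_map_count]
  refine Finset.sum_subset (fun a ha => hl a (List.mem_toFinset.1 ha)) fun a _ ha => ?_
  simp [List.count_eq_zero_of_not_mem (mt List.mem_toFinset.2 ha)]

open SimpleGraph

theorem gadget_edgeSet : gadget.edgeSet = {s(0, 1), s(1, 2), s(1, 3), s(1, 4)} := by
  rw [gadget, edgeSet_fromEdgeSet, sdiff_eq_left, Set.disjoint_left]
  simp only [Set.mem_insert_iff, Set.mem_singleton_iff]
  rintro e (rfl | rfl | rfl | rfl) <;> decide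

theorem gadget_eq_whisker_of_mem {x : Fin 5} (hx : x = 3 ∨ x = 4) :
    ∀ e ∈ gadget.edgeSet, x ∈ e → e = s(1, x) := by
  rw [gadget_edgeSet]
  rcases hx with rfl | rfl <;>
    rintro e (rfl | rfl | rfl | rfl | rfl) <;> decide

theorem gadget_two_le_count_whisker {x : Fin 5} (hx : x = 3 ∨ x = 4) (p : gadget.Walk 0 2)
    (hp : ∀ e ∈ gadget.edgeSet, e ∈ p.edges) : 2 ≤ p.edges.count s(1, x) := by
  have hedge : s(1, x) ∈ gadget.edgeSet := by
    rw [gadget_edgeSet]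
    rcases hx with rfl | rfl <;> simp
  exact p.two_le_count_edges_of_forall_mem_eq (by omega) (by omega) (Sym2.mem_mk_right 1 x)
    (gadget_eq_whisker_of_mem hx) (hp _ hedge)

theorem gadget_sum_map_edges_eq {u v : Fin 5} (p : gadget.Walk u v) (wt : Sym2 (Fin 5) → ℝ) :
    (p.edges.map wt).sum = p.edges.count s(0, 1) * wt s(0, 1) + p.edges.count s(1, 2) * wt s(1, 2)
      + p.edges.count s(1, 3) * wt s(1, 3) + p.edges.count s(1, 4) * wt s(1, 4) := by
  rw [List.sum_map_eq_sum_count p.edges {s(0, 1), s(1, 2), s(1, 3), s(1, 4)}]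
  · simp [Finset.sum_insert, nsmul_eq_mul, add_assoc]
  · intro e he
    simpa [gadget_edgeSet] using p.edges_subset_edgeSet he

theorem gadget_adj {i j : Fin 5} (h : s(i, j) ∈ ({s(0, 1), s(1, 2), s(1, 3), s(1, 4)} : Set _)) :
    gadget.Adj i j := by
  rwa [← mem_edgeSet, gadget_edgeSet]

def gadgetTour : gadget.Walk 0 2 :=
  .cons (gadget_adj (by simp) : gadget.Adj 0 1) <|
  .cons (gadget_adj (by simp) : gadget.Adj 1 3) <| .cons (gadget_adj (by simp) : gadget.Adj 3 1) <|
  .cons (gadget_adj (by simp) : gadget.Adj 1 4) <| .cons (gadget_adj (by simp) : gadget.Adj 4 1) <|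
  .cons (gadget_adj (by simp) : gadget.Adj 1 2) .nil

theorem gadgetTour_edges :
    gadgetTour.edges = [s(0, 1), s(1, 3), s(1, 3), s(1, 4), s(1, 4), s(1, 2)] := by
  simp [gadgetTour, Sym2.eq_swap]

theorem gadget_walk_cost_general (a b : ℝ) (hb : 0 < b)
    (wt : Sym2 (Fin 5) → ℝ)
    (h01 : wt s(0, 1) = a) (h12 : wt s(1, 2) = a)
    (h13 : wt s(1, 3) = b) (h14 : wt s(1, 4) = b) :
    (∀ p : gadget.Walk 0 2,
      (∀ e ∈ gadget.edgeSet, e ∈ p.edges) →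
      p.edges.count s(0, 1) = 1 → p.edges.count s(1, 2) = 1 →
      2 * a + 4 * b ≤ (p.edges.map wt).sum) ∧
    (∃ p : gadget.Walk 0 2,
      (∀ e ∈ gadget.edgeSet, e ∈ p.edges) ∧
      p.edges.count s(0, 1) = 1 ∧ p.edges.count s(1, 2) = 1 ∧
      (p.edges.map wt).sum = 2 * a + 4 * b) := by
  refine ⟨fun p hp c01 c12 => ?_, ?_⟩
  · have c13 := gadget_two_le_count_whisker (Or.inl rfl) p hp
    have c14 := gadget_two_le_count_whisker (Or.inr rfl) p hp
    rw [gadget_sum_map_edges_eq, c01, c12, h01, h12, h13, h14]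
    have : (2 : ℝ) * b ≤ p.edges.count s(1, 3) * b := by gcongr; exact_mod_cast c13
    have : (2 : ℝ) * b ≤ p.edges.count s(1, 4) * b := by gcongr; exact_mod_cast c14
    push_cast
    linarith
  · refine ⟨gadgetTour, ?_, ?_, ?_, ?_⟩ <;> simp only [gadgetTour_edges]
    · simp [gadget_edgeSet]
    · decide
    · decide
    · simp [h01, h12, h13, h14]; ring

/-- Every walk in the meta-edge gadget from `u` to `v` that traverses
every edge at least once and each of the weight-`a` edges `{u,w}`, `{w,v}` exactly once
has total weighted length at least `2a + 4b`; moreover some such walk has total weighted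
length exactly `2a + 4b`. -/
theorem gadget_walk_cost (a b : ℝ) (ha : 0 < a) (hb : 0 < b)
    (wt : Sym2 (Fin 5) → ℝ)
    (h01 : wt s(0, 1) = a) (h12 : wt s(1, 2) = a)
    (h13 : wt s(1, 3) = b) (h14 : wt s(1, 4) = b) :
    (∀ p : gadget.Walk 0 2,
      (∀ e ∈ gadget.edgeSet, e ∈ p.edges) →
      p.edges.count s(0, 1) = 1 → p.edges.count s(1, 2) = 1 →
      2 * a + 4 * b ≤ (p.edges.map wt).sum) ∧
    (∃ p : gadget.Walk 0 2,
      (∀ e ∈ gadget.edgeSet, e ∈ p.edges) ∧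
      p.edges.count s(0, 1) = 1 ∧ p.edges.count s(1, 2) = 1 ∧
      (p.edges.map wt).sum = 2 * a + 4 * b) :=
  gadget_walk_cost_general a b hb wt h01 h12 h13 h14
end
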